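/- Let L > 0 and let Λ := {(x,0) ∈ ℝ² : 0 < x < L}. Then for every constant ω ∈ ℝ with ω ≤ 1/(πL) and every pair of smooth compactly supported functions f, g : ℝ² → ℂ satisfying f(x,0) = g(x,0) for all x ∉ (0,L), one has ∫_{Ω₊} |∇f|² dx + ∫_{Ω₋} |∇g|² dx ≥ ω·∫₀^L |f(x,0) − g(x,0)|² dx, where Ω₊ and Ω₋ are the open upper and lower half-planes. (Improved threshold for the segment, obtained by covering Λ by two discs of radius L/2 centered at its endpoints.) -/

import Mathlib

open MeasureTheory Set Real

/-- The squared Dirichlet integrand |∇u|² = |∂₁u|² + |∂₂u|² of a function u : ℝ² → ℂ. -/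
noncomputable def gradSq (u : ℝ × ℝ → ℂ) (x : ℝ × ℝ) : ℝ :=
  ‖fderiv ℝ u x (1, 0)‖ ^ 2 + ‖fderiv ℝ u x (0, 1)‖ ^ 2


lemma gradSq_nonneg (u : ℝ × ℝ → ℂ) (x : ℝ × ℝ) : 0 ≤ gradSq u x := by
  unfold gradSq; positivity

lemma gradSq_continuous {u : ℝ × ℝ → ℂ} (hu : ContDiff ℝ (⊤ : ℕ∞) u) : Continuous (gradSq u) := by
  have h : Continuous (fderiv ℝ u) := hu.continuous_fderiv (by simp)
  exact ((h.clm_apply continuous_const).norm.pow 2).add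
    ((h.clm_apply continuous_const).norm.pow 2)

lemma gradSq_compactSupport {u : ℝ × ℝ → ℂ} (hu : HasCompactSupport u) :
    HasCompactSupport (gradSq u) := by
  have h := hu.fderiv (𝕜 := ℝ)
  apply HasCompactSupport.intro h.isCompact
  intro x hx
  have : fderiv ℝ u x = 0 := image_eq_zero_of_notMem_tsupport hx
  simp [gradSq, this]

lemma gradSq_integrableOn {u : ℝ × ℝ → ℂ} (hu : ContDiff ℝ (⊤ : ℕ∞) u)
    (hus : HasCompactSupport u) (s : Set (ℝ × ℝ)) : IntegrableOn (gradSq u) s := by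
  exact ((gradSq_continuous hu).integrable_of_hasCompactSupport
    (gradSq_compactSupport hus)).integrableOn

-- pointwise directional bound
lemma gradSq_integrable {u : ℝ × ℝ → ℂ} (hu : ContDiff ℝ (⊤ : ℕ∞) u)
    (hus : HasCompactSupport u) : Integrable (gradSq u) :=
  (gradSq_continuous hu).integrable_of_hasCompactSupport (gradSq_compactSupport hus)

lemma fderiv_dir_bound {u : ℝ × ℝ → ℂ} (p : ℝ × ℝ) (a b : ℝ) :
    ‖fderiv ℝ u p (a, b)‖ ^ 2 ≤ (a ^ 2 + b ^ 2) * gradSq u p := by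
  have hv : (a, b) = a • ((1:ℝ), (0:ℝ)) + b • ((0:ℝ), (1:ℝ)) := by
    simp [Prod.ext_iff]
  have h1 : fderiv ℝ u p (a, b) = a • fderiv ℝ u p (1, 0) + b • fderiv ℝ u p (0, 1) := by
    rw [hv, map_add, _root_.map_smul, _root_.map_smul]
  have h2 : ‖fderiv ℝ u p (a, b)‖ ≤ |a| * ‖fderiv ℝ u p (1, 0)‖ + |b| * ‖fderiv ℝ u p (0, 1)‖ := by
    rw [h1]
    refine (norm_add_le _ _).trans ?_
    simp [norm_smul, Real.norm_eq_abs]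
  have h3 : 0 ≤ ‖fderiv ℝ u p (a, b)‖ := norm_nonneg _
  have := abs_nonneg a
  have := abs_nonneg b
  have := norm_nonneg (fderiv ℝ u p (1, 0))
  have := norm_nonneg (fderiv ℝ u p (0, 1))
  have ha : |a| ^ 2 = a ^ 2 := sq_abs a
  have hb : |b| ^ 2 = b ^ 2 := sq_abs b
  unfold gradSq
  nlinarith [sq_nonneg (|a| * ‖fderiv ℝ u p (0, 1)‖ - |b| * ‖fderiv ℝ u p (1, 0)‖)]


lemma sq_integral_le {a b : ℝ} (hab : a ≤ b) {φ : ℝ → ℝ} (hφ : Continuous φ)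
    (hpos : ∀ x, 0 ≤ φ x) :
    (∫ x in a..b, φ x) ^ 2 ≤ (b - a) * ∫ x in a..b, φ x ^ 2 := by
  set μ := volume.restrict (Set.Ioc a b) with hμ
  haveI : IsFiniteMeasure μ := by
    constructor
    rw [hμ, Measure.restrict_apply_univ, Real.volume_Ioc]
    exact ENNReal.ofReal_lt_top
  obtain ⟨C, hC⟩ := (isCompact_Icc (a := a) (b := b)).exists_bound_of_continuousOn
    hφ.continuousOn
  have hmem : MemLp φ (ENNReal.ofReal 2) μ := by
    refine MemLp.of_bound hφ.aestronglyMeasurable C ?_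
    exact ae_restrict_of_forall_mem measurableSet_Ioc fun x hx => hC x (Ioc_subset_Icc_self hx)
  have hone : MemLp (fun _ : ℝ => (1:ℝ)) (ENNReal.ofReal 2) μ := memLp_const 1
  have hpq : Real.HolderConjugate 2 2 := Real.HolderConjugate.two_two
  have key := integral_mul_le_Lp_mul_Lq_of_nonneg (μ := μ) hpq
    (Filter.Eventually.of_forall hpos) (Filter.Eventually.of_forall fun _ => zero_le_one)
    hmem hone
  simp only [mul_one] at key
  have hrpow : ∀ x : ℝ, 0 ≤ x → x ^ (2:ℝ) = x ^ 2 := by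
    intro x hx
    rw [show (2:ℝ) = ((2:ℕ):ℝ) by norm_num, Real.rpow_natCast]
  have h2 : (∫ x, φ x ^ (2:ℝ) ∂μ) = ∫ x, φ x ^ 2 ∂μ :=
    integral_congr_ae (Filter.Eventually.of_forall fun x => hrpow _ (hpos x))
  have h3 : (∫ _x, (1:ℝ) ^ (2:ℝ) ∂μ) = b - a := by
    simp [hμ, Real.volume_Ioc, ENNReal.toReal_ofReal (sub_nonneg.2 hab), hab]
  rw [h2, h3] at key
  have hA : 0 ≤ ∫ x, φ x ^ 2 ∂μ := integral_nonneg fun x => sq_nonneg _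
  have hB : 0 ≤ b - a := sub_nonneg.2 hab
  have hsq : ((∫ x, φ x ^ 2 ∂μ) ^ (1/(2:ℝ)) * (b - a) ^ (1/(2:ℝ))) ^ 2
      = (∫ x, φ x ^ 2 ∂μ) * (b - a) := by
    rw [mul_pow, ← Real.rpow_natCast (_ ^ (1/(2:ℝ))) 2, ← Real.rpow_natCast (_ ^ (1/(2:ℝ))) 2,
      ← Real.rpow_mul hA, ← Real.rpow_mul hB]
    norm_num
  have hnn : 0 ≤ ∫ x, φ x ∂μ := integral_nonneg hpos
  rw [intervalIntegral.integral_of_le hab, intervalIntegral.integral_of_le hab]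
  calc (∫ x in Set.Ioc a b, φ x) ^ 2 ≤ ((∫ x, φ x ^ 2 ∂μ) ^ (1/(2:ℝ)) * (b - a) ^ (1/(2:ℝ))) ^ 2 := by
        apply pow_le_pow_left₀ hnn
        exact key
    _ = (∫ x, φ x ^ 2 ∂μ) * (b - a) := hsq
    _ = (b - a) * ∫ x in Set.Ioc a b, φ x ^ 2 := by rw [mul_comm]

lemma cs_interval {h : ℝ → ℂ} (hc : Continuous h) :
    ‖∫ θ in (0:ℝ)..Real.pi, h θ‖ ^ 2 ≤ Real.pi * ∫ θ in (0:ℝ)..Real.pi, ‖h θ‖ ^ 2 := by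
  have h1 : ‖∫ θ in (0:ℝ)..Real.pi, h θ‖ ≤ ∫ θ in (0:ℝ)..Real.pi, ‖h θ‖ := by
    refine (intervalIntegral.norm_integral_le_abs_integral_norm).trans ?_
    rw [abs_of_nonneg]
    exact intervalIntegral.integral_nonneg Real.pi_pos.le fun x _ => norm_nonneg _
  calc ‖∫ θ in (0:ℝ)..Real.pi, h θ‖ ^ 2 ≤ (∫ θ in (0:ℝ)..Real.pi, ‖h θ‖) ^ 2 :=
        pow_le_pow_left₀ (norm_nonneg _) h1 2
    _ ≤ (Real.pi - 0) * ∫ θ in (0:ℝ)..Real.pi, ‖h θ‖ ^ 2 :=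
        sq_integral_le Real.pi_pos.le hc.norm (fun x => norm_nonneg _)
    _ = Real.pi * ∫ θ in (0:ℝ)..Real.pi, ‖h θ‖ ^ 2 := by rw [sub_zero]




lemma jump_bound {u v : ℝ × ℝ → ℂ} (hu : ContDiff ℝ (⊤ : ℕ∞) u) (hv : ContDiff ℝ (⊤ : ℕ∞) v)
    (r : ℝ) (heq : u (-r, 0) = v (-r, 0)) :
    ‖u (r, 0) - v (r, 0)‖ ^ 2 ≤ 2 * Real.pi * r ^ 2 *
      ∫ θ in (0:ℝ)..Real.pi,
        (gradSq u (r * Real.cos θ, r * Real.sin θ) + gradSq v (r * Real.cos θ, r * Real.sin θ)) := by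
  set γ : ℝ → ℝ × ℝ := fun θ => (r * Real.cos θ, r * Real.sin θ) with hγ
  have hγc : Continuous γ := by fun_prop
  have hγd : ∀ θ, HasDerivAt γ (r * -Real.sin θ, r * Real.cos θ) θ := fun θ =>
    ((Real.hasDerivAt_cos θ).const_mul r).prodMk ((Real.hasDerivAt_sin θ).const_mul r)
  set H' : ℝ → ℂ := fun θ =>
    fderiv ℝ u (γ θ) (r * -Real.sin θ, r * Real.cos θ)
      - fderiv ℝ v (γ θ) (r * -Real.sin θ, r * Real.cos θ) with hH'
  have hder : ∀ θ, HasDerivAt (fun θ => u (γ θ) - v (γ θ)) (H' θ) θ := by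
    intro θ
    have h1 : HasDerivAt (fun θ => u (γ θ)) (fderiv ℝ u (γ θ) (r * -Real.sin θ, r * Real.cos θ)) θ :=
      ((hu.differentiable (by simp) (γ θ)).hasFDerivAt).comp_hasDerivAt θ (hγd θ)
    have h2 : HasDerivAt (fun θ => v (γ θ)) (fderiv ℝ v (γ θ) (r * -Real.sin θ, r * Real.cos θ)) θ :=
      ((hv.differentiable (by simp) (γ θ)).hasFDerivAt).comp_hasDerivAt θ (hγd θ)
    exact h1.sub h2
  have hH'c : Continuous H' := by
    have hdir : Continuous fun θ : ℝ => ((r * -Real.sin θ, r * Real.cos θ) : ℝ × ℝ) := by fun_prop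
    exact (((hu.continuous_fderiv (by simp)).comp hγc).clm_apply hdir).sub
      (((hv.continuous_fderiv (by simp)).comp hγc).clm_apply hdir)
  have hFTC : ∫ θ in (0:ℝ)..Real.pi, H' θ = (u (γ Real.pi) - v (γ Real.pi)) - (u (γ 0) - v (γ 0)) :=
    intervalIntegral.integral_eq_sub_of_hasDerivAt (fun θ _ => hder θ)
      (hH'c.intervalIntegrable _ _)
  have hγπ : γ Real.pi = (-r, 0) := by simp [hγ]
  have hγ0 : γ 0 = (r, 0) := by simp [hγ]
  have hint : ∫ θ in (0:ℝ)..Real.pi, H' θ = -(u (r, 0) - v (r, 0)) := by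
    rw [hFTC, hγπ, hγ0, heq]; ring
  have hjump : ‖u (r, 0) - v (r, 0)‖ ^ 2 = ‖∫ θ in (0:ℝ)..Real.pi, H' θ‖ ^ 2 := by
    rw [hint, norm_neg]
  have hcs := cs_interval hH'c
  have hpt : ∀ θ : ℝ, ‖H' θ‖ ^ 2 ≤ 2 * r ^ 2 * (gradSq u (γ θ) + gradSq v (γ θ)) := by
    intro θ
    have hb1 := fderiv_dir_bound (u := u) (γ θ) (r * -Real.sin θ) (r * Real.cos θ)
    have hb2 := fderiv_dir_bound (u := v) (γ θ) (r * -Real.sin θ) (r * Real.cos θ)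
    have hsum : (r * -Real.sin θ) ^ 2 + (r * Real.cos θ) ^ 2 = r ^ 2 := by
      have := Real.sin_sq_add_cos_sq θ
      nlinarith
    rw [hsum] at hb1 hb2
    have htri : ‖H' θ‖ ≤ ‖fderiv ℝ u (γ θ) (r * -Real.sin θ, r * Real.cos θ)‖
        + ‖fderiv ℝ v (γ θ) (r * -Real.sin θ, r * Real.cos θ)‖ := norm_sub_le _ _
    nlinarith [norm_nonneg (H' θ), norm_nonneg (fderiv ℝ u (γ θ) (r * -Real.sin θ, r * Real.cos θ)),
      norm_nonneg (fderiv ℝ v (γ θ) (r * -Real.sin θ, r * Real.cos θ)),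
      sq_nonneg (‖fderiv ℝ u (γ θ) (r * -Real.sin θ, r * Real.cos θ)‖
        - ‖fderiv ℝ v (γ θ) (r * -Real.sin θ, r * Real.cos θ)‖)]
  have hmono : ∫ θ in (0:ℝ)..Real.pi, ‖H' θ‖ ^ 2
      ≤ ∫ θ in (0:ℝ)..Real.pi, 2 * r ^ 2 * (gradSq u (γ θ) + gradSq v (γ θ)) := by
    apply intervalIntegral.integral_mono_on Real.pi_pos.le
      ((hH'c.norm.pow 2).intervalIntegrable _ _)
    · exact (Continuous.intervalIntegrable (by
        exact (continuous_const.mul (((gradSq_continuous hu).comp hγc).add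
          ((gradSq_continuous hv).comp hγc)))) _ _)
    · exact fun θ _ => hpt θ
  have hfac : ∫ θ in (0:ℝ)..Real.pi, 2 * r ^ 2 * (gradSq u (γ θ) + gradSq v (γ θ))
      = 2 * r ^ 2 * ∫ θ in (0:ℝ)..Real.pi, (gradSq u (γ θ) + gradSq v (γ θ)) := by
    rw [intervalIntegral.integral_const_mul]
  calc ‖u (r, 0) - v (r, 0)‖ ^ 2 = ‖∫ θ in (0:ℝ)..Real.pi, H' θ‖ ^ 2 := hjump
    _ ≤ Real.pi * ∫ θ in (0:ℝ)..Real.pi, ‖H' θ‖ ^ 2 := hcs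
    _ ≤ Real.pi * (2 * r ^ 2 * ∫ θ in (0:ℝ)..Real.pi, (gradSq u (γ θ) + gradSq v (γ θ))) := by
        rw [← hfac]
        exact mul_le_mul_of_nonneg_left hmono Real.pi_pos.le
    _ = 2 * Real.pi * r ^ 2 * ∫ θ in (0:ℝ)..Real.pi,
        (gradSq u (r * Real.cos θ, r * Real.sin θ) + gradSq v (r * Real.cos θ, r * Real.sin θ)) := by
        ring


noncomputable def halfDisc (R : ℝ) : Set (ℝ × ℝ) :=
  {p : ℝ × ℝ | p.1 ^ 2 + p.2 ^ 2 < R ^ 2 ∧ 0 < p.2}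

lemma halfDisc_isOpen (R : ℝ) : IsOpen (halfDisc R) :=
  ((isOpen_lt ((continuous_fst.pow 2).add (continuous_snd.pow 2)) continuous_const)).inter
    (isOpen_lt continuous_const continuous_snd)

lemma polar_symm_mem_halfDisc {R : ℝ} (hR : 0 < R) {q : ℝ × ℝ}
    (hq : q ∈ polarCoord.target) :
    (q.1 * Real.cos q.2, q.1 * Real.sin q.2) ∈ halfDisc R ↔ q ∈ Ioo 0 R ×ˢ Ioo 0 π := by
  rw [polarCoord_target] at hq
  obtain ⟨hq1, hq2⟩ := hq
  simp only [mem_Ioi] at hq1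
  simp only [mem_Ioo] at hq2
  simp only [halfDisc, mem_setOf_eq, mem_prod, mem_Ioo]
  have hsq : (q.1 * Real.cos q.2) ^ 2 + (q.1 * Real.sin q.2) ^ 2 = q.1 ^ 2 := by
    have h := Real.sin_sq_add_cos_sq q.2
    calc (q.1 * Real.cos q.2) ^ 2 + (q.1 * Real.sin q.2) ^ 2
        = q.1 ^ 2 * (Real.sin q.2 ^ 2 + Real.cos q.2 ^ 2) := by ring
      _ = q.1 ^ 2 := by rw [h, mul_one]
  constructor
  · rintro ⟨h1, h2⟩
    have hr2 : q.1 ^ 2 < R ^ 2 := by rw [← hsq]; exact h1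
    have hrR : q.1 < R := by nlinarith
    have hsin : 0 < Real.sin q.2 := by
      rcases lt_or_ge 0 (Real.sin q.2) with h | h
      · exact h
      · nlinarith
    have hθ : 0 < q.2 := by
      by_contra hle
      push_neg at hle
      have := Real.sin_nonpos_of_nonpos_of_neg_pi_le hle hq2.1.le
      linarith
    exact ⟨⟨hq1, hrR⟩, hθ, hq2.2⟩
  · rintro ⟨⟨h0, hr⟩, hθ⟩
    have hsin : 0 < Real.sin q.2 := Real.sin_pos_of_pos_of_lt_pi hθ.1 hθ.2
    constructor
    · rw [hsq]
      exact pow_lt_pow_left₀ hr h0.le (by norm_num)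
    · positivity

lemma halfDisc_polar (Φ : ℝ × ℝ → ℝ)
    {R : ℝ} (hR : 0 < R) :
    (∫ q in Ioo (0:ℝ) R ×ˢ Ioo (0:ℝ) π, q.1 * Φ (q.1 * Real.cos q.2, q.1 * Real.sin q.2))
      = ∫ p in halfDisc R, Φ p := by
  have key := integral_comp_polarCoord_symm ((halfDisc R).indicator Φ)
  rw [integral_indicator (halfDisc_isOpen R).measurableSet] at key
  have hsub : Ioo (0:ℝ) R ×ˢ Ioo (0:ℝ) π ⊆ polarCoord.target := by
    rw [polarCoord_target]
    exact prod_mono Ioo_subset_Ioi_self (Ioo_subset_Ioo (by linarith [Real.pi_pos]) le_rfl)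
  calc (∫ q in Ioo (0:ℝ) R ×ˢ Ioo (0:ℝ) π, q.1 * Φ (q.1 * Real.cos q.2, q.1 * Real.sin q.2))
      = ∫ q in polarCoord.target ∩ (Ioo (0:ℝ) R ×ˢ Ioo (0:ℝ) π),
          q.1 * Φ (q.1 * Real.cos q.2, q.1 * Real.sin q.2) := by
        rw [inter_eq_self_of_subset_right hsub]
    _ = ∫ q in polarCoord.target, (Ioo (0:ℝ) R ×ˢ Ioo (0:ℝ) π).indicator
          (fun q => q.1 * Φ (q.1 * Real.cos q.2, q.1 * Real.sin q.2)) q :=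
        (setIntegral_indicator (measurableSet_Ioo.prod measurableSet_Ioo)).symm
    _ = ∫ q in polarCoord.target, q.1 • (halfDisc R).indicator Φ (polarCoord.symm q) := by
        apply setIntegral_congr_fun polarCoord.open_target.measurableSet
        intro q hq
        have hmem := polar_symm_mem_halfDisc hR hq
        simp only [polarCoord_symm_apply, smul_eq_mul]
        by_cases h : q ∈ Ioo (0:ℝ) R ×ˢ Ioo (0:ℝ) π
        · rw [indicator_of_mem h, indicator_of_mem (hmem.2 h)]
        · rw [indicator_of_notMem h, indicator_of_notMem (fun hc => h (hmem.1 hc)), mul_zero]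
    _ = ∫ p in halfDisc R, Φ p := key

lemma halfDisc_iterated {Φ : ℝ × ℝ → ℝ} (hΦc : Continuous Φ) (hΦi : Integrable Φ)
    {R : ℝ} (hR : 0 < R) :
    (∫ r in (0:ℝ)..R, ∫ θ in (0:ℝ)..π, r * Φ (r * Real.cos θ, r * Real.sin θ))
        = ∫ p in halfDisc R, Φ p
      ∧ IntervalIntegrable
          (fun r => ∫ θ in (0:ℝ)..π, r * Φ (r * Real.cos θ, r * Real.sin θ)) volume 0 R := by
  set g : ℝ × ℝ → ℝ := fun q => q.1 * Φ (q.1 * Real.cos q.2, q.1 * Real.sin q.2) with hg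
  have hgc : Continuous g := by
    apply continuous_fst.mul
    exact hΦc.comp (by fun_prop)
  have hsub : Ioo (0:ℝ) R ×ˢ Ioo (0:ℝ) π ⊆ Icc ((0:ℝ),(0:ℝ)) (R, π) := by
    rw [← Icc_prod_Icc]
    exact prod_mono Ioo_subset_Icc_self Ioo_subset_Icc_self
  have hgint : IntegrableOn g (Ioo (0:ℝ) R ×ˢ Ioo (0:ℝ) π) :=
    (hgc.continuousOn.integrableOn_compact isCompact_Icc).mono_set hsub
  have hgint' : Integrable g ((volume.restrict (Ioo (0:ℝ) R)).prod (volume.restrict (Ioo (0:ℝ) π))) := by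
    rw [Measure.prod_restrict]
    rw [IntegrableOn, Measure.volume_eq_prod] at hgint
    exact hgint
  have hinner : ∀ r : ℝ, (∫ θ, g (r, θ) ∂(volume.restrict (Ioo (0:ℝ) π)))
      = ∫ θ in (0:ℝ)..π, r * Φ (r * Real.cos θ, r * Real.sin θ) := by
    intro r
    rw [intervalIntegral.integral_of_le Real.pi_pos.le, ← integral_Ioc_eq_integral_Ioo]
  constructor
  · calc (∫ r in (0:ℝ)..R, ∫ θ in (0:ℝ)..π, r * Φ (r * Real.cos θ, r * Real.sin θ))
        = ∫ r in Ioo (0:ℝ) R, ∫ θ in (0:ℝ)..π, r * Φ (r * Real.cos θ, r * Real.sin θ) := by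
          rw [intervalIntegral.integral_of_le hR.le, integral_Ioc_eq_integral_Ioo]
      _ = ∫ r in Ioo (0:ℝ) R, ∫ θ in Ioo (0:ℝ) π, g (r, θ) := by
          refine setIntegral_congr_fun measurableSet_Ioo fun r _ => ?_
          rw [← hinner r]
      _ = ∫ q in Ioo (0:ℝ) R ×ˢ Ioo (0:ℝ) π, g q ∂(volume.prod volume) :=
          (setIntegral_prod g (by rw [IntegrableOn, ← Measure.prod_restrict]; exact hgint')).symm
      _ = ∫ q in Ioo (0:ℝ) R ×ˢ Ioo (0:ℝ) π, g q := by rw [← Measure.volume_eq_prod]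
      _ = ∫ p in halfDisc R, Φ p := halfDisc_polar Φ hR
  · have hInt := hgint'.integral_prod_left
    have : IntegrableOn (fun r => ∫ θ in (0:ℝ)..π, r * Φ (r * Real.cos θ, r * Real.sin θ))
        (Ioo (0:ℝ) R) := by
      apply (integrable_congr (Filter.Eventually.of_forall hinner)).1 hInt
    rw [intervalIntegrable_iff_integrableOn_Ioo_of_le hR.le]
    exact this





lemma endpoint_bound {u v : ℝ × ℝ → ℂ} (hu : ContDiff ℝ (⊤ : ℕ∞) u) (hv : ContDiff ℝ (⊤ : ℕ∞) v)
    (hus : HasCompactSupport u) (hvs : HasCompactSupport v) {R : ℝ} (hR : 0 < R)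
    (heq : ∀ r ∈ Icc (0:ℝ) R, u (-r, 0) = v (-r, 0)) :
    ∫ x in (0:ℝ)..R, ‖u (x, 0) - v (x, 0)‖ ^ 2
      ≤ 2 * π * R * ∫ p in halfDisc R, (gradSq u p + gradSq v p) := by
  set Φ : ℝ × ℝ → ℝ := fun p => gradSq u p + gradSq v p with hΦ
  have hΦc : Continuous Φ := (gradSq_continuous hu).add (gradSq_continuous hv)
  have hΦi : Integrable Φ := (gradSq_integrable hu hus).add (gradSq_integrable hv hvs)
  have hΦ0 : ∀ p, 0 ≤ Φ p := fun p => add_nonneg (gradSq_nonneg u p) (gradSq_nonneg v p)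
  obtain ⟨hEq, hII⟩ := halfDisc_iterated hΦc hΦi hR
  set M : ℝ → ℝ := fun r => ∫ θ in (0:ℝ)..π, r * Φ (r * Real.cos θ, r * Real.sin θ) with hM
  have hM0 : ∀ r, 0 ≤ r → 0 ≤ M r := fun r hr =>
    intervalIntegral.integral_nonneg Real.pi_pos.le fun θ _ => mul_nonneg hr (hΦ0 _)
  have hpt : ∀ r ∈ Icc (0:ℝ) R, ‖u (r, 0) - v (r, 0)‖ ^ 2 ≤ 2 * π * R * M r := by
    intro r hr
    have hj := jump_bound hu hv r (heq r hr)
    have hMr : M r = r * ∫ θ in (0:ℝ)..π, Φ (r * Real.cos θ, r * Real.sin θ) := by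
      rw [hM]
      exact intervalIntegral.integral_const_mul r _
    have hθint : 0 ≤ ∫ θ in (0:ℝ)..π, Φ (r * Real.cos θ, r * Real.sin θ) :=
      intervalIntegral.integral_nonneg Real.pi_pos.le fun θ _ => hΦ0 _
    calc ‖u (r, 0) - v (r, 0)‖ ^ 2
        ≤ 2 * π * r ^ 2 * ∫ θ in (0:ℝ)..π, Φ (r * Real.cos θ, r * Real.sin θ) := hj
      _ = 2 * π * r * M r := by rw [hMr]; ring
      _ ≤ 2 * π * R * M r := by
          apply mul_le_mul_of_nonneg_right _ (hM0 r hr.1)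
          nlinarith [Real.pi_pos, hr.1, hr.2]
  have hcont : Continuous fun x : ℝ => ‖u (x, 0) - v (x, 0)‖ ^ 2 := by
    have : Continuous fun x : ℝ => u (x, 0) - v (x, 0) := by
      exact ((hu.continuous).comp (by fun_prop)).sub ((hv.continuous).comp (by fun_prop))
    exact this.norm.pow 2
  have hmono := intervalIntegral.integral_mono_on hR.le (hcont.intervalIntegrable 0 R)
    (hII.const_mul (2 * π * R)) hpt
  calc ∫ x in (0:ℝ)..R, ‖u (x, 0) - v (x, 0)‖ ^ 2
      ≤ ∫ r in (0:ℝ)..R, 2 * π * R * M r := hmono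
    _ = 2 * π * R * ∫ r in (0:ℝ)..R, M r := intervalIntegral.integral_const_mul _ _
    _ = 2 * π * R * ∫ p in halfDisc R, Φ p := by rw [hEq]



-- reflection
def refl2 : ℝ × ℝ → ℝ × ℝ := fun p => (p.1, -p.2)

noncomputable def refl2h : ℝ × ℝ ≃ₜ ℝ × ℝ :=
  { toFun := refl2
    invFun := refl2
    left_inv := fun p => by simp [refl2]
    right_inv := fun p => by simp [refl2]
    continuous_toFun := by unfold refl2; fun_prop
    continuous_invFun := by unfold refl2; fun_prop }

def refl2L : ℝ × ℝ →L[ℝ] ℝ × ℝ :=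
  (ContinuousLinearMap.fst ℝ ℝ ℝ).prod (-(ContinuousLinearMap.snd ℝ ℝ ℝ))

lemma refl2_hasFDerivAt (p : ℝ × ℝ) : HasFDerivAt refl2 refl2L p := by
  have : refl2 = fun q : ℝ × ℝ => refl2L q := by
    ext q <;> simp [refl2, refl2L]
  rw [this]
  exact refl2L.hasFDerivAt

lemma gradSq_refl2 {u : ℝ × ℝ → ℂ} (hu : ContDiff ℝ (⊤ : ℕ∞) u) (p : ℝ × ℝ) :
    gradSq (fun q => u (refl2 q)) p = gradSq u (refl2 p) := by
  have hcomp : HasFDerivAt (fun q => u (refl2 q))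
      ((fderiv ℝ u (refl2 p)).comp refl2L) p :=
    ((hu.differentiable (by simp) (refl2 p)).hasFDerivAt).comp p (refl2_hasFDerivAt p)
  rw [gradSq, gradSq, hcomp.fderiv]
  have h1 : refl2L ((1:ℝ), (0:ℝ)) = (1, 0) := by simp [refl2L]
  have h2 : refl2L ((0:ℝ), (1:ℝ)) = (0, -1) := by simp [refl2L]
  simp only [ContinuousLinearMap.comp_apply, h1, h2]
  congr 2
  have : ((0:ℝ), (-1:ℝ)) = -((0:ℝ), (1:ℝ)) := by simp
  rw [this, map_neg, norm_neg]

lemma refl2_measurePreserving : MeasurePreserving refl2 (volume : Measure (ℝ × ℝ)) volume :=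
  (MeasurePreserving.id volume).prod (Measure.measurePreserving_neg volume)

-- flip about x = L/2 : p ↦ (L - p.1, p.2)
def flip2 (L : ℝ) : ℝ × ℝ → ℝ × ℝ := fun p => (L - p.1, p.2)

noncomputable def flip2h (L : ℝ) : ℝ × ℝ ≃ₜ ℝ × ℝ :=
  { toFun := flip2 L
    invFun := flip2 L
    left_inv := fun p => by simp [flip2]
    right_inv := fun p => by simp [flip2]
    continuous_toFun := by unfold flip2; fun_prop
    continuous_invFun := by unfold flip2; fun_prop }

def flip2L : ℝ × ℝ →L[ℝ] ℝ × ℝ :=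
  (-(ContinuousLinearMap.fst ℝ ℝ ℝ)).prod (ContinuousLinearMap.snd ℝ ℝ ℝ)

lemma flip2_hasFDerivAt (L : ℝ) (p : ℝ × ℝ) : HasFDerivAt (flip2 L) flip2L p := by
  have : flip2 L = fun q : ℝ × ℝ => ((L, (0:ℝ)) + flip2L q) := by
    ext q <;> simp [flip2, flip2L] <;> ring
  rw [this]
  simpa using (flip2L.hasFDerivAt (x := p)).const_add ((L, (0:ℝ)))
lemma gradSq_flip2 {u : ℝ × ℝ → ℂ} (hu : ContDiff ℝ (⊤ : ℕ∞) u) (L : ℝ) (p : ℝ × ℝ) :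
    gradSq (fun q => u (flip2 L q)) p = gradSq u (flip2 L p) := by
  have hcomp : HasFDerivAt (fun q => u (flip2 L q))
      ((fderiv ℝ u (flip2 L p)).comp flip2L) p :=
    ((hu.differentiable (by simp) (flip2 L p)).hasFDerivAt).comp p (flip2_hasFDerivAt L p)
  rw [gradSq, gradSq, hcomp.fderiv]
  have h1 : flip2L ((1:ℝ), (0:ℝ)) = (-1, 0) := by simp [flip2L]
  have h2 : flip2L ((0:ℝ), (1:ℝ)) = (0, 1) := by simp [flip2L]
  simp only [ContinuousLinearMap.comp_apply, h1, h2]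
  congr 2
  have : ((-1:ℝ), (0:ℝ)) = -((1:ℝ), (0:ℝ)) := by simp
  rw [this, map_neg, norm_neg]

lemma flip2_measurePreserving (L : ℝ) :
    MeasurePreserving (flip2 L) (volume : Measure (ℝ × ℝ)) volume := by
  have h1 : MeasurePreserving (fun x : ℝ => L - x) volume volume := by
    have : (fun x : ℝ => L - x) = (fun x : ℝ => L + x) ∘ (fun x : ℝ => -x) := by
      ext x; simp [sub_eq_add_neg]
    rw [this]
    exact (measurePreserving_add_left volume L).comp
      (Measure.measurePreserving_neg volume)
  exact h1.prod (MeasurePreserving.id volume)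

lemma contDiff_comp_refl2 {u : ℝ × ℝ → ℂ} (hu : ContDiff ℝ (⊤ : ℕ∞) u) :
    ContDiff ℝ (⊤ : ℕ∞) (fun q => u (refl2 q)) :=
  hu.comp (contDiff_fst.prodMk contDiff_snd.neg)

lemma contDiff_comp_flip2 {u : ℝ × ℝ → ℂ} (hu : ContDiff ℝ (⊤ : ℕ∞) u) (L : ℝ) :
    ContDiff ℝ (⊤ : ℕ∞) (fun q => u (flip2 L q)) :=
  hu.comp ((contDiff_const.sub contDiff_fst).prodMk contDiff_snd)

lemma hcs_comp_refl2 {u : ℝ × ℝ → ℂ} (hus : HasCompactSupport u) :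
    HasCompactSupport (fun q => u (refl2 q)) :=
  hus.comp_homeomorph refl2h

lemma hcs_comp_flip2 {u : ℝ × ℝ → ℂ} (hus : HasCompactSupport u) (L : ℝ) :
    HasCompactSupport (fun q => u (flip2 L q)) :=
  hus.comp_homeomorph (flip2h L)


/-- The δ′-interaction of constant strength ω ≤ 1/(πL) (improved threshold via two discs of radius L/2) supported on the segment
Λ = {(x,0) : 0 < x < L} produces a nonnegative quadratic form: for all smooth compactly
supported f, g agreeing on the x-axis outside (0,L),
∫_{Ω₊}|∇f|² + ∫_{Ω₋}|∇g|² ≥ ω·∫₀^L |f(x,0) − g(x,0)|² dx. -/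
theorem stmt_13 (L : ℝ) (hL : 0 < L) (ω : ℝ) (hω : ω ≤ 1 / (Real.pi * L))
    (f g : ℝ × ℝ → ℂ) (hf : ContDiff ℝ (⊤ : ℕ∞) f) (hg : ContDiff ℝ (⊤ : ℕ∞) g)
    (hfs : HasCompactSupport f) (hgs : HasCompactSupport g)
    (hjump : ∀ x : ℝ, x ∉ Set.Ioo 0 L → f (x, 0) = g (x, 0)) :
    ω * ∫ x in (0 : ℝ)..L, ‖f (x, 0) - g (x, 0)‖ ^ 2
      ≤ (∫ x in {p : ℝ × ℝ | 0 < p.2}, gradSq f x)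
        + (∫ x in {p : ℝ × ℝ | p.2 < 0}, gradSq g x) := by
  set R : ℝ := L / 2 with hRdef
  have hR : 0 < R := by positivity
  set v : ℝ × ℝ → ℂ := fun q => g (refl2 q) with hvdef
  have hv : ContDiff ℝ (⊤ : ℕ∞) v := contDiff_comp_refl2 hg
  have hvs : HasCompactSupport v := hcs_comp_refl2 hgs
  have hvg : ∀ x : ℝ, v (x, 0) = g (x, 0) := fun x => by simp [hvdef, refl2]
  set Φ : ℝ × ℝ → ℝ := fun p => gradSq f p + gradSq v p with hΦdef
  have hΦc : Continuous Φ := (gradSq_continuous hf).add (gradSq_continuous hv)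
  have hΦi : Integrable Φ := (gradSq_integrable hf hfs).add (gradSq_integrable hv hvs)
  have hΦ0 : ∀ p, 0 ≤ Φ p := fun p => add_nonneg (gradSq_nonneg f p) (gradSq_nonneg v p)
  -- first endpoint
  have heq1 : ∀ r ∈ Icc (0:ℝ) R, f (-r, 0) = v (-r, 0) := by
    intro r hr
    rw [hvg]
    exact hjump (-r) (fun hc => by simp only [mem_Ioo] at hc; linarith [hr.1])
  have E1 := endpoint_bound hf hv hfs hvs hR heq1
  -- second endpoint, via flip
  set u2 : ℝ × ℝ → ℂ := fun q => f (flip2 L q) with hu2def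
  set v2 : ℝ × ℝ → ℂ := fun q => v (flip2 L q) with hv2def
  have hu2 : ContDiff ℝ (⊤ : ℕ∞) u2 := contDiff_comp_flip2 hf L
  have hv2 : ContDiff ℝ (⊤ : ℕ∞) v2 := contDiff_comp_flip2 hv L
  have hu2s : HasCompactSupport u2 := hcs_comp_flip2 hfs L
  have hv2s : HasCompactSupport v2 := hcs_comp_flip2 hvs L
  have heq2 : ∀ r ∈ Icc (0:ℝ) R, u2 (-r, 0) = v2 (-r, 0) := by
    intro r hr
    show f (flip2 L (-r, 0)) = v (flip2 L (-r, 0))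
    have hfl : flip2 L (-r, 0) = (L + r, 0) := by simp [flip2, sub_neg_eq_add]
    rw [hfl, hvg]
    exact hjump (L + r) (fun hc => by simp only [mem_Ioo] at hc; linarith [hr.1])
  have E2 := endpoint_bound hu2 hv2 hu2s hv2s hR heq2
  -- rewrite E2 LHS
  have hE2L : (∫ x in (0:ℝ)..R, ‖u2 (x, 0) - v2 (x, 0)‖ ^ 2)
      = ∫ x in R..L, ‖f (x, 0) - v (x, 0)‖ ^ 2 := by
    have h1 : (fun x : ℝ => ‖u2 (x, 0) - v2 (x, 0)‖ ^ 2)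
        = fun x : ℝ => ‖f (L - x, 0) - v (L - x, 0)‖ ^ 2 := by
      funext x; rfl
    rw [h1]
    have := intervalIntegral.integral_comp_sub_left (a := (0:ℝ)) (b := R)
      (fun t : ℝ => ‖f (t, 0) - v (t, 0)‖ ^ 2) L
    rw [this]
    have hLR : L - R = R := by rw [hRdef]; ring
    rw [hLR, sub_zero]
  -- rewrite E2 RHS via flip measure preservation
  set DL : Set (ℝ × ℝ) := {q : ℝ × ℝ | (L - q.1) ^ 2 + q.2 ^ 2 < R ^ 2 ∧ 0 < q.2} with hDLdef
  have hDLopen : IsOpen DL := by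
    have h1 : Continuous fun q : ℝ × ℝ => (L - q.1) ^ 2 + q.2 ^ 2 :=
      ((continuous_const.sub continuous_fst).pow 2).add (continuous_snd.pow 2)
    exact ((isOpen_lt h1 continuous_const)).inter (isOpen_lt continuous_const continuous_snd)
  have hE2R : (∫ p in halfDisc R, (gradSq u2 p + gradSq v2 p)) = ∫ p in DL, Φ p := by
    have hpre : (flip2 L) ⁻¹' DL = halfDisc R := by
      ext p
      simp only [hDLdef, halfDisc, mem_preimage, mem_setOf_eq, flip2]
      constructor
      · rintro ⟨h1, h2⟩; exact ⟨by nlinarith, h2⟩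
      · rintro ⟨h1, h2⟩; exact ⟨by nlinarith, h2⟩
    have hkey := (flip2_measurePreserving L).setIntegral_preimage_emb
      ((flip2h L).measurableEmbedding) Φ DL
    rw [hpre] at hkey
    rw [← hkey]
    apply setIntegral_congr_fun (halfDisc_isOpen R).measurableSet
    intro p _
    show gradSq u2 p + gradSq v2 p = Φ (flip2 L p)
    rw [hu2def, hv2def, hΦdef]
    simp only
    rw [gradSq_flip2 hf L p, gradSq_flip2 hv L p]
  -- combine interval integrals
  have hcontJ : Continuous fun x : ℝ => ‖f (x, 0) - g (x, 0)‖ ^ 2 := by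
    have : Continuous fun x : ℝ => f (x, 0) - g (x, 0) :=
      ((hf.continuous).comp (by fun_prop)).sub ((hg.continuous).comp (by fun_prop))
    exact this.norm.pow 2
  have hJsplit : (∫ x in (0:ℝ)..L, ‖f (x, 0) - g (x, 0)‖ ^ 2)
      = (∫ x in (0:ℝ)..R, ‖f (x, 0) - g (x, 0)‖ ^ 2)
        + ∫ x in R..L, ‖f (x, 0) - g (x, 0)‖ ^ 2 :=
    (intervalIntegral.integral_add_adjacent_intervals
      (hcontJ.intervalIntegrable 0 R) (hcontJ.intervalIntegrable R L)).symm
  have hcongr1 : (∫ x in (0:ℝ)..R, ‖f (x, 0) - v (x, 0)‖ ^ 2)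
      = ∫ x in (0:ℝ)..R, ‖f (x, 0) - g (x, 0)‖ ^ 2 := by
    apply intervalIntegral.integral_congr
    intro x _; simp only; rw [hvg]
  have hcongr2 : (∫ x in R..L, ‖f (x, 0) - v (x, 0)‖ ^ 2)
      = ∫ x in R..L, ‖f (x, 0) - g (x, 0)‖ ^ 2 := by
    apply intervalIntegral.integral_congr
    intro x _; simp only; rw [hvg]
  -- disjointness and union boun
  set Ωp : Set (ℝ × ℝ) := {p : ℝ × ℝ | 0 < p.2} with hΩpdef
  have hΩpmeas : MeasurableSet Ωp := (isOpen_lt continuous_const continuous_snd).measurableSet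
  have hdisj : Disjoint (halfDisc R) DL := by
    rw [Set.disjoint_left]
    rintro p ⟨h1, h2⟩ ⟨h3, h4⟩
    have ha : p.1 < R := by nlinarith
    have hb : L - p.1 < R := by nlinarith
    rw [hRdef] at ha hb
    linarith
  have hsub : halfDisc R ∪ DL ⊆ Ωp := by
    rintro p (⟨_, h⟩ | ⟨_, h⟩) <;> exact h
  have hunion : (∫ p in halfDisc R, Φ p) + (∫ p in DL, Φ p) ≤ ∫ p in Ωp, Φ p := by
    have := setIntegral_union hdisj hDLopen.measurableSet
      (hΦi.integrableOn (s := halfDisc R)) (hΦi.integrableOn (s := DL))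
    rw [← this]
    apply setIntegral_mono_set hΦi.integrableOn
      (Filter.Eventually.of_forall fun p => hΦ0 p)
      (HasSubset.Subset.eventuallyLE hsub)
  -- reflection identity
  have hrefl : (∫ p in Ωp, gradSq v p) = ∫ p in {p : ℝ × ℝ | p.2 < 0}, gradSq g p := by
    have hpre : refl2 ⁻¹' {p : ℝ × ℝ | p.2 < 0} = Ωp := by
      ext p
      simp [refl2, hΩpdef]
    have hkey := refl2_measurePreserving.setIntegral_preimage_emb
      (refl2h.measurableEmbedding) (gradSq g) {p : ℝ × ℝ | p.2 < 0}
    rw [hpre] at hkey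
    rw [← hkey]
    apply setIntegral_congr_fun hΩpmeas
    intro p _
    exact gradSq_refl2 hg p
  have hΦsplit : (∫ p in Ωp, Φ p)
      = (∫ p in Ωp, gradSq f p) + ∫ p in Ωp, gradSq v p :=
    integral_add ((gradSq_integrable hf hfs).integrableOn)
      ((gradSq_integrable hv hvs).integrableOn)
  -- main chain
  have key : (∫ x in (0:ℝ)..L, ‖f (x, 0) - g (x, 0)‖ ^ 2)
      ≤ Real.pi * L * ((∫ x in Ωp, gradSq f x) + ∫ x in {p : ℝ × ℝ | p.2 < 0}, gradSq g x) := by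
    rw [hJsplit, ← hcongr1, ← hcongr2, ← hE2L]
    have h2πR : 2 * π * R = Real.pi * L := by rw [hRdef]; ring
    calc (∫ x in (0:ℝ)..R, ‖f (x, 0) - v (x, 0)‖ ^ 2)
          + ∫ x in (0:ℝ)..R, ‖u2 (x, 0) - v2 (x, 0)‖ ^ 2
        ≤ (2 * π * R * ∫ p in halfDisc R, (gradSq f p + gradSq v p))
          + 2 * π * R * ∫ p in halfDisc R, (gradSq u2 p + gradSq v2 p) := add_le_add E1 E2
      _ = 2 * π * R * ((∫ p in halfDisc R, Φ p) + ∫ p in DL, Φ p) := by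
          rw [hE2R, ← mul_add]
      _ ≤ 2 * π * R * ∫ p in Ωp, Φ p := by
          apply mul_le_mul_of_nonneg_left hunion
          positivity
      _ = Real.pi * L * ((∫ x in Ωp, gradSq f x) + ∫ x in {p : ℝ × ℝ | p.2 < 0}, gradSq g x) := by
          rw [h2πR, hΦsplit, hrefl]
  have hJ0 : 0 ≤ ∫ x in (0:ℝ)..L, ‖f (x, 0) - g (x, 0)‖ ^ 2 :=
    intervalIntegral.integral_nonneg hL.le fun x _ => sq_nonneg _
  have hRHS0 : 0 ≤ (∫ x in Ωp, gradSq f x) + ∫ x in {p : ℝ × ℝ | p.2 < 0}, gradSq g x := by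
    apply add_nonneg
    · exact setIntegral_nonneg hΩpmeas fun p _ => gradSq_nonneg f p
    · exact setIntegral_nonneg (isOpen_lt continuous_snd continuous_const).measurableSet
        fun p _ => gradSq_nonneg g p
  have hπL : 0 < Real.pi * L := by positivity
  rcases le_or_gt ω 0 with hω0 | hω0
  · exact le_trans (mul_nonpos_of_nonpos_of_nonneg hω0 hJ0) hRHS0
  · calc ω * ∫ x in (0:ℝ)..L, ‖f (x, 0) - g (x, 0)‖ ^ 2
        ≤ (1 / (Real.pi * L)) * ∫ x in (0:ℝ)..L, ‖f (x, 0) - g (x, 0)‖ ^ 2 :=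
          mul_le_mul_of_nonneg_right hω hJ0
      _ ≤ (∫ x in Ωp, gradSq f x) + ∫ x in {p : ℝ × ℝ | p.2 < 0}, gradSq g x := by
          rw [one_div, inv_mul_le_iff₀ hπL]
          calc (∫ x in (0:ℝ)..L, ‖f (x, 0) - g (x, 0)‖ ^ 2)
              ≤ Real.pi * L * ((∫ x in Ωp, gradSq f x)
                  + ∫ x in {p : ℝ × ℝ | p.2 < 0}, gradSq g x) := key
            _ = _ := by ring
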